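/- arXiv:1611.08415 — 2 statements merged into one kernel-verified Lean document; each statement's English description precedes it below -/
import Mathlib

section
/- For every natural number n > 2, the normaliser of the standard dihedral subgroup D_{2n} in SO(3) equals the standard dihedral subgroup D_{4n} (the subgroup generated by R_z(π/n) and ρ). -/
noncomputable section

/-- `SO(3)`: the special orthogonal group of `3 × 3` real matrices. -/
abbrev SO3 := Matrix.specialOrthogonalGroup (Fin 3) ℝ

noncomputable instance : Group SO3 :=
  { (inferInstance : Monoid SO3) with
    inv := fun A => ⟨star A.1, by
      rw [Matrix.mem_specialOrthogonalGroup_iff]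
      refine ⟨Unitary.star_mem A.2.1, ?_⟩
      have h : (A.1).det = 1 := A.2.2
      rw [Matrix.star_eq_conjTranspose, Matrix.det_conjTranspose, h, star_one]⟩
    inv_mul_cancel := fun A => Subtype.ext A.2.1.1 }

open Real in
/-- The matrix of the rotation by `θ` about the z-axis. -/
def RzMat (θ : ℝ) : Matrix (Fin 3) (Fin 3) ℝ :=
  !![cos θ, -sin θ, 0;
     sin θ,  cos θ, 0;
     0, 0, 1]

lemma RzMat_mem (θ : ℝ) : RzMat θ ∈ Matrix.specialOrthogonalGroup (Fin 3) ℝ := by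
  rw [Matrix.mem_specialOrthogonalGroup_iff]
  constructor
  · rw [Matrix.mem_orthogonalGroup_iff]
    ext i j
    fin_cases i <;> fin_cases j <;>
      simp [RzMat, Matrix.mul_apply, Fin.sum_univ_succ, Matrix.star_eq_conjTranspose,
        Matrix.conjTranspose_apply, Matrix.vecHead, Matrix.vecTail] <;>
      nlinarith [Real.sin_sq_add_cos_sq θ]
  · simp [RzMat, Matrix.det_fin_three]
    nlinarith [Real.sin_sq_add_cos_sq θ]

/-- The rotation by `θ` about the z-axis, as an element of SO(3). -/
def Rz (θ : ℝ) : SO3 := ⟨RzMat θ, RzMat_mem θ⟩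

/-- The matrix `diag (1, -1, -1)`. -/
def rhoMat : Matrix (Fin 3) (Fin 3) ℝ := !![1,0,0; 0,-1,0; 0,0,-1]

lemma rhoMat_mem : rhoMat ∈ Matrix.specialOrthogonalGroup (Fin 3) ℝ := by
  rw [Matrix.mem_specialOrthogonalGroup_iff]
  constructor
  · rw [Matrix.mem_orthogonalGroup_iff]
    ext i j
    fin_cases i <;> fin_cases j <;>
      simp [rhoMat, Matrix.mul_apply, Fin.sum_univ_succ, Matrix.star_eq_conjTranspose,
        Matrix.conjTranspose_apply, Matrix.vecHead, Matrix.vecTail]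
  · simp [rhoMat, Matrix.det_fin_three]

/-- `ρ = diag (1, -1, -1)`, the rotation by `π` about the x-axis, as an element of SO(3). -/
def ρ : SO3 := ⟨rhoMat, rhoMat_mem⟩

lemma Rz_add (a b : ℝ) : Rz a * Rz b = Rz (a + b) := by
  apply Subtype.ext
  show RzMat a * RzMat b = RzMat (a + b)
  ext i j
  fin_cases i <;> fin_cases j <;>
    simp [RzMat, Matrix.mul_apply, Fin.sum_univ_succ, Matrix.vecHead, Matrix.vecTail,
      Real.cos_add, Real.sin_add] <;> ring

lemma Rz_zero : Rz 0 = 1 := by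
  apply Subtype.ext
  show RzMat 0 = 1
  ext i j
  fin_cases i <;> fin_cases j <;>
    simp [RzMat, Matrix.one_apply, Matrix.vecHead, Matrix.vecTail]

lemma rho_sq : ρ * ρ = 1 := by
  apply Subtype.ext
  show rhoMat * rhoMat = 1
  ext i j
  fin_cases i <;> fin_cases j <;>
    simp [rhoMat, Matrix.mul_apply, Fin.sum_univ_succ, Matrix.one_apply,
      Matrix.vecHead, Matrix.vecTail]

lemma Rz_rho (θ : ℝ) : Rz θ * ρ = ρ * Rz (-θ) := by
  apply Subtype.ext
  show RzMat θ * rhoMat = rhoMat * RzMat (-θ)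
  ext i j
  fin_cases i <;> fin_cases j <;>
    simp [RzMat, rhoMat, Matrix.mul_apply, Fin.sum_univ_succ,
      Matrix.vecHead, Matrix.vecTail]

lemma Rz_inv (θ : ℝ) : (Rz θ)⁻¹ = Rz (-θ) := by
  symm
  rw [eq_inv_iff_mul_eq_one, Rz_add]
  simpa using Rz_zero

lemma rho_inv : ρ⁻¹ = ρ := inv_eq_of_mul_eq_one_right rho_sq
/-- The standard dihedral subgroup `D_{2n} ⊆ SO(3)` of order `2n`,
generated by `Rz (2π/n)` and `ρ`. -/
def D2n (n : ℕ) : Subgroup SO3 := Subgroup.closure {Rz (2 * Real.pi / n), ρ}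


lemma Rz_congr {a b : ℝ} (h : a = b) : Rz a = Rz b := by rw [h]

lemma rho_rho (x : SO3) : ρ * (ρ * x) = x := by rw [← mul_assoc, rho_sq, one_mul]

lemma rho_Rz (θ : ℝ) : ρ * Rz θ = Rz (-θ) * ρ := by rw [Rz_rho, neg_neg]

lemma Rz_npow (δ : ℝ) (m : ℕ) : Rz δ ^ m = Rz ((m : ℝ) * δ) := by
  induction m with
  | zero => simp [Rz_zero]
  | succ k ih =>
    rw [pow_succ, ih, Rz_add]
    exact Rz_congr (by push_cast; ring)

lemma Rz_zpow (δ : ℝ) (k : ℤ) : Rz δ ^ k = Rz ((k : ℝ) * δ) := by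
  cases k with
  | ofNat m => rw [Int.ofNat_eq_coe, zpow_natCast, Rz_npow]; exact Rz_congr (by push_cast; ring)
  | negSucc m =>
    rw [zpow_negSucc, Rz_npow, Rz_inv]
    exact Rz_congr (by push_cast; ring)

/-- The explicit description of the dihedral subgroup generated by `Rz δ` and `ρ`. -/
def Dset (δ : ℝ) : Subgroup SO3 where
  carrier := {x | ∃ k : ℤ, x = Rz ((k : ℝ) * δ) ∨ x = Rz ((k : ℝ) * δ) * ρ}
  one_mem' := ⟨0, Or.inl (by norm_num [Rz_zero])⟩
  mul_mem' := by
    rintro x y ⟨k, rfl | rfl⟩ ⟨m, rfl | rfl⟩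
    · exact ⟨k + m, Or.inl (by rw [Rz_add]; exact Rz_congr (by push_cast; ring))⟩
    · exact ⟨k + m, Or.inr (by
        rw [← mul_assoc, Rz_add, show (k : ℝ) * δ + (m : ℝ) * δ = ((k + m : ℤ) : ℝ) * δ from by
          push_cast; ring])⟩
    · refine ⟨k - m, Or.inr ?_⟩
      rw [mul_assoc, rho_Rz, ← mul_assoc, Rz_add,
        show (k : ℝ) * δ + -((m : ℝ) * δ) = ((k - m : ℤ) : ℝ) * δ from by push_cast; ring]
    · refine ⟨k - m, Or.inl ?_⟩
      rw [mul_assoc, ← mul_assoc ρ, rho_Rz, mul_assoc, rho_sq, mul_one, Rz_add]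
      exact Rz_congr (by push_cast; ring)
  inv_mem' := by
    rintro x ⟨k, rfl | rfl⟩
    · exact ⟨-k, Or.inl (by rw [Rz_inv]; exact Rz_congr (by push_cast; ring))⟩
    · exact ⟨k, Or.inr (by rw [mul_inv_rev, rho_inv, Rz_inv, ← Rz_rho])⟩

lemma mem_Dset {δ : ℝ} {x : SO3} :
    x ∈ Dset δ ↔ ∃ k : ℤ, x = Rz ((k : ℝ) * δ) ∨ x = Rz ((k : ℝ) * δ) * ρ := Iff.rfl

lemma closure_eq_Dset (δ : ℝ) : Subgroup.closure {Rz δ, ρ} = Dset δ := by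
  apply le_antisymm
  · rw [Subgroup.closure_le]
    rintro x (rfl | rfl)
    · exact mem_Dset.2 ⟨1, Or.inl (by norm_num)⟩
    · exact mem_Dset.2 ⟨0, Or.inr (by norm_num [Rz_zero])⟩
  · intro x hx
    obtain ⟨k, rfl | rfl⟩ := mem_Dset.1 hx
    · rw [← Rz_zpow]
      exact Subgroup.zpow_mem _ (Subgroup.subset_closure (Set.mem_insert _ _)) k
    · rw [← Rz_zpow]
      exact Subgroup.mul_mem _
        (Subgroup.zpow_mem _ (Subgroup.subset_closure (Set.mem_insert _ _)) k)
        (Subgroup.subset_closure (Set.mem_insert_of_mem _ rfl))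

lemma Rz_inj {a b : ℝ} (h : Rz a = Rz b) : ∃ m : ℤ, a - b = 2 * Real.pi * m := by
  have hm : RzMat a = RzMat b := congrArg Subtype.val h
  have hc : Real.cos a = Real.cos b := by
    have := (Matrix.ext_iff.2 hm) 0 0; simpa [RzMat] using this
  have hs : Real.sin a = Real.sin b := by
    have := (Matrix.ext_iff.2 hm) 1 0; simpa [RzMat] using this
  exact Real.Angle.angle_eq_iff_two_pi_dvd_sub.1 (Real.Angle.cos_sin_inj hc hs)

set_option maxHeartbeats 2000000 in
lemma normalizer_structure (θ : ℝ) (h1 : -1 < Real.cos θ) (h2 : Real.cos θ < 1)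
    (g : SO3) (hc : g * Rz θ * g⁻¹ ∈ Dset θ) :
    (∃ φ, g = Rz φ) ∨ (∃ φ, g = Rz φ * ρ) := by
  set M : Matrix (Fin 3) (Fin 3) ℝ := g.1 with hMdef
  have hMMt : M * star M = 1 := g.2.1.2
  have hMtM : star M * M = 1 := g.2.1.1
  have hdet : M.det = 1 := g.2.2
  have R2 := (Matrix.ext_iff.2 hMMt) 2 2
  have R0 := (Matrix.ext_iff.2 hMMt) 0 0
  have R1 := (Matrix.ext_iff.2 hMMt) 1 1
  have R01 := (Matrix.ext_iff.2 hMMt) 0 1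
  have C0 := (Matrix.ext_iff.2 hMtM) 0 0
  have C2 := (Matrix.ext_iff.2 hMtM) 2 2
  simp [Matrix.mul_apply, Fin.sum_univ_succ, Matrix.star_apply,
    Matrix.one_apply] at R2 R0 R1 R01 C0 C2
  rw [Matrix.det_fin_three] at hdet
  obtain ⟨k, hk | hk⟩ := mem_Dset.1 hc
  case inr =>
    -- reflection case is impossible
    exfalso
    have hmat : M * RzMat θ * star M = RzMat ((k : ℝ) * θ) * rhoMat := congrArg Subtype.val hk
    have h22 := (Matrix.ext_iff.2 hmat) 2 2
    simp [Matrix.mul_apply, Fin.sum_univ_succ, Matrix.star_apply, RzMat, rhoMat] at h22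
    clear hc hk hmat hMMt hMtM hdet
    nlinarith [mul_self_nonneg (M 2 0), mul_self_nonneg (M 2 1), mul_self_nonneg (M 2 2), R2, h22,
      mul_nonneg (add_nonneg (mul_self_nonneg (M 2 0)) (mul_self_nonneg (M 2 1)))
        (by linarith : (0:ℝ) ≤ 1 + Real.cos θ)]
  case inl =>
  have hmat : M * RzMat θ * star M = RzMat ((k : ℝ) * θ) := congrArg Subtype.val hk
  have h22 := (Matrix.ext_iff.2 hmat) 2 2
  simp [Matrix.mul_apply, Fin.sum_univ_succ, Matrix.star_apply, RzMat] at h22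
  clear hc hk hmat hMMt hMtM
  have key : (1 - Real.cos θ) * (M 2 0 * M 2 0 + M 2 1 * M 2 1) = 0 := by
    linear_combination R2 - h22
  have hab : M 2 0 * M 2 0 + M 2 1 * M 2 1 = 0 := by
    rcases mul_eq_zero.1 key with h' | h'
    · nlinarith
    · exact h'
  have h20 : M 2 0 = 0 := by
    have : M 2 0 * M 2 0 = 0 := by nlinarith [mul_self_nonneg (M 2 1)]
    exact mul_self_eq_zero.1 this
  have h21 : M 2 1 = 0 := by
    have : M 2 1 * M 2 1 = 0 := by nlinarith [mul_self_nonneg (M 2 0)]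
    exact mul_self_eq_zero.1 this
  have hsq : M 2 2 * M 2 2 = 1 := by linear_combination R2 - hab
  have h02 : M 0 2 = 0 := by
    have : M 0 2 * M 0 2 = 0 := by nlinarith [mul_self_nonneg (M 1 2), C2]
    exact mul_self_eq_zero.1 this
  have h12 : M 1 2 = 0 := by
    have : M 1 2 * M 1 2 = 0 := by nlinarith [mul_self_nonneg (M 0 2), C2]
    exact mul_self_eq_zero.1 this
  rw [h02, h12, h20, h21] at hdet
  have e4 : M 0 0 * M 1 1 - M 0 1 * M 1 0 = M 2 2 := by
    linear_combination M 2 2 * hdet - (M 0 0 * M 1 1 - M 0 1 * M 1 0) * hsq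
  have hone : M 0 0 * M 0 0 + M 1 0 * M 1 0 = 1 := by
    linear_combination C0 - M 2 0 * h20
  set z : ℂ := ⟨M 0 0, M 1 0⟩ with hzdef
  have hz : z ≠ 0 := by
    intro h0
    have ha : M 0 0 = 0 := by simpa using congrArg Complex.re h0
    have hb : M 1 0 = 0 := by simpa using congrArg Complex.im h0
    rw [ha, hb] at hone; norm_num at hone
  have habs : ‖z‖ = 1 := by
    rw [Complex.norm_def, Complex.normSq_mk, hone, Real.sqrt_one]
  have hcos : Real.cos (Complex.arg z) = M 0 0 := by
    rw [Complex.cos_arg hz, habs, div_one]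
  have hsin : Real.sin (Complex.arg z) = M 1 0 := by
    rw [Complex.sin_arg, habs, div_one]
  rw [h02] at R0 R01
  rw [h12] at R1 R01
  rcases mul_self_eq_one_iff.1 hsq with hs1 | hs1
  · left
    refine ⟨Complex.arg z, ?_⟩
    have det2 : M 0 0 * M 1 1 - M 0 1 * M 1 0 = 1 := by rw [e4, hs1]
    have hd : M 1 1 = M 0 0 := by
      linear_combination M 0 0 * det2 + M 0 1 * R01 - M 1 1 * R0
    have hbb : M 0 1 = -(M 1 0) := by
      linear_combination M 1 1 * R01 - M 0 1 * R1 - M 1 0 * det2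
    apply Subtype.ext
    show M = RzMat (Complex.arg z)
    ext i j
    fin_cases i <;> fin_cases j <;> simp [RzMat] <;>
      linarith [hcos, hsin, hbb, hd, h02, h12, h20, h21, hs1]
  · right
    refine ⟨Complex.arg z, ?_⟩
    have det2 : M 0 0 * M 1 1 - M 0 1 * M 1 0 = -1 := by rw [e4, hs1]
    have hd : M 1 1 = -(M 0 0) := by
      linear_combination M 0 0 * det2 + M 0 1 * R01 - M 1 1 * R0
    have hbb : M 0 1 = M 1 0 := by
      linear_combination M 1 1 * R01 - M 0 1 * R1 - M 1 0 * det2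
    apply Subtype.ext
    show M = RzMat (Complex.arg z) * rhoMat
    ext i j
    fin_cases i <;> fin_cases j <;>
      simp [RzMat, rhoMat, Matrix.mul_apply, Fin.sum_univ_succ] <;>
      linarith [hcos, hsin, hbb, hd, h02, h12, h20, h21, hs1]

lemma conj_Rz_mem (δ φ : ℝ) (k : ℤ) (h : φ + φ = (k : ℝ) * δ) {x : SO3} (hx : x ∈ Dset δ) :
    Rz φ * x * (Rz φ)⁻¹ ∈ Dset δ := by
  obtain ⟨m, rfl | rfl⟩ := mem_Dset.1 hx
  · refine mem_Dset.2 ⟨m, Or.inl ?_⟩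
    rw [Rz_inv, Rz_add, Rz_add]
    exact Rz_congr (by ring)
  · refine mem_Dset.2 ⟨m + k, Or.inr ?_⟩
    rw [Rz_inv, ← mul_assoc, Rz_add, mul_assoc,
      show ρ * Rz (-φ) = Rz φ * ρ from (Rz_rho φ).symm, ← mul_assoc, Rz_add,
      show φ + (m : ℝ) * δ + φ = ((m + k : ℤ) : ℝ) * δ from by push_cast; linarith [h]]

lemma conj_rho_mem (δ : ℝ) {x : SO3} (hx : x ∈ Dset δ) : ρ * x * ρ⁻¹ ∈ Dset δ := by
  obtain ⟨m, rfl | rfl⟩ := mem_Dset.1 hx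
  · refine mem_Dset.2 ⟨-m, Or.inl ?_⟩
    rw [rho_inv, rho_Rz, mul_assoc, rho_sq, mul_one,
      show -((m : ℝ) * δ) = ((-m : ℤ) : ℝ) * δ from by push_cast; ring]
  · refine mem_Dset.2 ⟨-m, Or.inr ?_⟩
    rw [rho_inv, ← mul_assoc, rho_Rz, mul_assoc (Rz (-((m : ℝ) * δ))) ρ ρ, rho_sq, mul_one,
      show -((m : ℝ) * δ) = ((-m : ℤ) : ℝ) * δ from by push_cast; ring]

lemma final_step (n : ℕ) (hn : 0 < n) (φ : ℝ)
    (h : Rz (φ + φ) * ρ ∈ Dset (2 * Real.pi / n)) :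
    Rz φ ∈ Subgroup.closure {Rz (Real.pi / n), ρ} := by
  obtain ⟨k, hk | hk⟩ := mem_Dset.1 h
  · have hmat : RzMat (φ + φ) * rhoMat = RzMat ((k : ℝ) * (2 * Real.pi / n)) :=
      congrArg Subtype.val hk
    have h22 := (Matrix.ext_iff.2 hmat) 2 2
    simp [RzMat, rhoMat, Matrix.mul_apply, Fin.sum_univ_succ] at h22
    exact absurd h22 (by norm_num)
  · have hEq : Rz (φ + φ) = Rz ((k : ℝ) * (2 * Real.pi / n)) := mul_right_cancel hk
    obtain ⟨m, hm⟩ := Rz_inj hEq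
    have hnR : (n : ℝ) ≠ 0 := Nat.cast_ne_zero.2 hn.ne'
    have hφ : φ = ((k + m * n : ℤ) : ℝ) * (Real.pi / n) := by
      field_simp at hm ⊢
      ring_nf at hm ⊢
      push_cast
      linear_combination hm / 2
    rw [hφ, ← Rz_zpow]
    exact Subgroup.zpow_mem _ (Subgroup.subset_closure (Set.mem_insert _ _)) _

/-- For every `n > 2`, the normaliser of the standard dihedral subgroup `D_{2n}` in
`SO(3)` is the standard dihedral subgroup `D_{4n}`, generated by `Rz (π/n)` and `ρ`. -/
theorem normalizer_D2n (n : ℕ) (hn : 2 < n) :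
    Subgroup.normalizer (D2n n : Set SO3) = Subgroup.closure {Rz (Real.pi / n), ρ} := by
  have hn0 : 0 < n := by omega
  have hnR : (0 : ℝ) < n := by exact_mod_cast hn0
  have hθpos : 0 < 2 * Real.pi / n := by positivity
  have hθlt : 2 * Real.pi / n < Real.pi := by
    rw [div_lt_iff₀ hnR]
    have h2n : (2 : ℝ) < n := by exact_mod_cast hn
    nlinarith [Real.pi_pos]
  have h2 : Real.cos (2 * Real.pi / n) < 1 := by
    have := Real.cos_lt_cos_of_nonneg_of_le_pi le_rfl hθlt.le hθpos
    rwa [Real.cos_zero] at this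
  have h1 : -1 < Real.cos (2 * Real.pi / n) := by
    have := Real.cos_lt_cos_of_nonneg_of_le_pi hθpos.le le_rfl hθlt
    rwa [Real.cos_pi] at this
  have hD : D2n n = Dset (2 * Real.pi / n) := closure_eq_Dset _
  apply le_antisymm
  · intro g hg
    rw [Subgroup.mem_normalizer_iff] at hg
    have hc : g * Rz (2 * Real.pi / n) * g⁻¹ ∈ Dset (2 * Real.pi / n) := by
      rw [← hD]
      exact (hg _).1 (Subgroup.subset_closure (Set.mem_insert _ _))
    have hρc : g * ρ * g⁻¹ ∈ Dset (2 * Real.pi / n) := by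
      rw [← hD]
      exact (hg _).1 (Subgroup.subset_closure (Set.mem_insert_of_mem _ rfl))
    rcases normalizer_structure _ h1 h2 g hc with ⟨φ, rfl⟩ | ⟨φ, rfl⟩
    · have hEq : Rz φ * ρ * (Rz φ)⁻¹ = Rz (φ + φ) * ρ := by
        rw [Rz_inv, mul_assoc, show ρ * Rz (-φ) = Rz φ * ρ from (Rz_rho φ).symm,
          ← mul_assoc, Rz_add]
      rw [hEq] at hρc
      exact final_step n hn0 φ hρc
    · have hEq : Rz φ * ρ * ρ * (Rz φ * ρ)⁻¹ = Rz (φ + φ) * ρ := by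
        rw [mul_inv_rev, rho_inv, Rz_inv, mul_assoc (Rz φ) ρ ρ, rho_sq, mul_one,
          show ρ * Rz (-φ) = Rz φ * ρ from (Rz_rho φ).symm, ← mul_assoc, Rz_add]
      rw [hEq] at hρc
      exact Subgroup.mul_mem _ (final_step n hn0 φ hρc)
        (Subgroup.subset_closure (Set.mem_insert_of_mem _ rfl))
  · rw [Subgroup.closure_le]
    rintro x (rfl | rfl)
    · rw [SetLike.mem_coe, Subgroup.mem_normalizer_iff]
      intro y
      rw [hD]
      constructor
      · exact conj_Rz_mem _ _ 1 (by push_cast; ring)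
      · intro hy
        have h' := conj_Rz_mem (2 * Real.pi / n) (-(Real.pi / n)) (-1) (by push_cast; ring) hy
        have e2 : Rz (-(Real.pi / n)) * (Rz (Real.pi / n) * y * (Rz (Real.pi / n))⁻¹) *
            (Rz (-(Real.pi / n)))⁻¹ = y := by
          rw [show Rz (-(Real.pi / n)) = (Rz (Real.pi / n))⁻¹ from (Rz_inv _).symm]
          group
        rwa [e2] at h'
    · rw [SetLike.mem_coe, Subgroup.mem_normalizer_iff]
      intro y
      rw [hD]
      constructor
      · exact conj_rho_mem _
      · intro hy
        have h' := conj_rho_mem _ hy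
        have e2 : ρ * (ρ * y * ρ⁻¹) * ρ⁻¹ = y := by
          rw [rho_inv]
          simp [mul_assoc, rho_sq, rho_rho]
        rwa [e2] at h'

end
end

section
/- The standard embedded O(2) in SO(3) equals its own normaliser in SO(3). -/
noncomputable section

/-- The standard maximal torus `SO(2) ⊆ SO(3)`, consisting of all rotations
about the z-axis. -/
def SO2 : Subgroup SO3 where
  carrier := Set.range Rz
  one_mem' := ⟨0, Rz_zero⟩
  mul_mem' := by
    rintro _ _ ⟨a, rfl⟩ ⟨b, rfl⟩
    exact ⟨a + b, (Rz_add a b).symm⟩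
  inv_mem' := by
    rintro _ ⟨a, rfl⟩
    exact ⟨-a, (Rz_inv a).symm⟩

/-- The standard embedded `O(2) ⊆ SO(3)`, consisting of all `Rz θ` together with
all `ρ * Rz θ`. -/
def O2 : Subgroup SO3 where
  carrier := {g | ∃ θ : ℝ, g = Rz θ ∨ g = ρ * Rz θ}
  one_mem' := ⟨0, Or.inl Rz_zero.symm⟩
  mul_mem' := by
    rintro x y ⟨a, (rfl | rfl)⟩ ⟨b, (rfl | rfl)⟩
    · exact ⟨a + b, Or.inl (Rz_add a b)⟩
    · refine ⟨-a + b, Or.inr ?_⟩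
      rw [← mul_assoc, Rz_rho, mul_assoc, Rz_add]
    · refine ⟨a + b, Or.inr ?_⟩
      rw [mul_assoc, Rz_add]
    · refine ⟨-a + b, Or.inl ?_⟩
      rw [← mul_assoc, mul_assoc ρ (Rz a) ρ, Rz_rho, ← mul_assoc, rho_sq,
        one_mul, Rz_add]
  inv_mem' := by
    rintro x ⟨a, (rfl | rfl)⟩
    · exact ⟨-a, Or.inl (Rz_inv a)⟩
    · refine ⟨a, Or.inr ?_⟩
      rw [mul_inv_rev, Rz_inv, rho_inv, Rz_rho, neg_neg]



lemma exists_cos_sin {a c : ℝ} (h : a ^ 2 + c ^ 2 = 1) :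
    ∃ θ : ℝ, Real.cos θ = a ∧ Real.sin θ = c := by
  have ha1 : -1 ≤ a := by nlinarith
  have ha2 : a ≤ 1 := by nlinarith
  rcases le_or_gt 0 c with hc | hc
  · refine ⟨Real.arccos a, Real.cos_arccos ha1 ha2, ?_⟩
    rw [Real.sin_arccos, show 1 - a ^ 2 = c ^ 2 by linarith, Real.sqrt_sq hc]
  · refine ⟨-Real.arccos a, by rw [Real.cos_neg]; exact Real.cos_arccos ha1 ha2, ?_⟩
    rw [Real.sin_neg, Real.sin_arccos, show 1 - a ^ 2 = c ^ 2 by linarith,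
      Real.sqrt_sq_eq_abs, abs_of_neg hc, neg_neg]

lemma rho_mul_RzMat (φ : ℝ) :
    rhoMat * RzMat φ = !![Real.cos φ, -Real.sin φ, 0;
                          -Real.sin φ, -Real.cos φ, 0;
                          0, 0, -1] := by
  ext i j
  fin_cases i <;> fin_cases j <;>
    simp [rhoMat, RzMat, Matrix.mul_apply, Fin.sum_univ_succ,
      Matrix.vecHead, Matrix.vecTail]

set_option maxHeartbeats 1000000 in
/-- The standard embedded `O(2)` in `SO(3)` equals its own normaliser in `SO(3)`. -/
theorem O2_self_normalizing : Subgroup.normalizer (O2 : Set SO3) = O2 := by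
  refine le_antisymm ?_ Subgroup.le_normalizer
  intro g hg
  rw [Subgroup.mem_normalizer_iff] at hg
  have hmem : g * Rz (Real.pi/2) * g⁻¹ ∈ O2 := (hg _).mp ⟨Real.pi/2, Or.inl rfl⟩
  have key : g * Rz Real.pi * g⁻¹ = (g * Rz (Real.pi/2) * g⁻¹) * (g * Rz (Real.pi/2) * g⁻¹) := by
    have h2 : Rz (Real.pi/2) * Rz (Real.pi/2) = Rz Real.pi := by
      rw [Rz_add]; norm_num
    rw [← h2]; group
  obtain ⟨θ, hθ | hθ⟩ := hmem
  swap
  · -- reflection case is impossible: the square would be 1 but Rz π ≠ 1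
    exfalso
    have h1 : (ρ * Rz θ) * (ρ * Rz θ) = 1 := by
      rw [mul_assoc ρ (Rz θ), ← mul_assoc (Rz θ) ρ, Rz_rho, ← mul_assoc, ← mul_assoc,
        rho_sq, one_mul, Rz_add]
      simpa using Rz_zero
    rw [hθ, h1] at key
    have hpi : Rz Real.pi = 1 := by
      have h' : g * Rz Real.pi = g * 1 := by
        rw [mul_one]; exact mul_inv_eq_one.mp key
      exact mul_left_cancel h' 
    have hcontr := congrArg (fun m : SO3 => m.1 0 0) hpi
    simp [Rz, RzMat, Matrix.one_apply] at hcontr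
    linarith
  · -- rotation case: g commutes with Rz π
    rw [hθ, Rz_add] at key
    set A := g.1 with hA
    have hst : star A * A = 1 := g.2.1.1
    have hmat : A * RzMat Real.pi * star A = RzMat (θ + θ) :=
      congrArg Subtype.val key
    have htr : Matrix.trace (RzMat (θ + θ)) = Matrix.trace (RzMat Real.pi) := by
      rw [← hmat, Matrix.trace_mul_cycle, hst, one_mul]
    have htr2 : Real.cos (θ + θ) = -1 := by
      simp [Matrix.trace, RzMat, Fin.sum_univ_succ, Matrix.diag] at htr
      linarith
    have hsin : Real.sin (θ + θ) = 0 := by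
      have h := Real.sin_sq_add_cos_sq (θ + θ)
      nlinarith
    have hRzeq : Rz (θ + θ) = Rz Real.pi := by
      apply Subtype.ext
      show RzMat (θ + θ) = RzMat Real.pi
      ext i j
      fin_cases i <;> fin_cases j <;> simp [RzMat, htr2, hsin]
    rw [hRzeq] at key
    have hcomm' : g * Rz Real.pi = Rz Real.pi * g := mul_inv_eq_iff_eq_mul.mp key
    have hcomm : A * RzMat Real.pi = RzMat Real.pi * A := congrArg Subtype.val hcomm'
    have hMpi : RzMat Real.pi = !![-1,0,0; 0,-1,0; 0,0,1] := by
      ext i j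
      fin_cases i <;> fin_cases j <;> simp [RzMat]
    rw [hMpi] at hcomm
    have e02 : A 0 2 = 0 := by
      have h := congrFun (congrFun hcomm 0) 2
      simp [Matrix.mul_apply, Fin.sum_univ_succ] at h
      linarith
    have e12 : A 1 2 = 0 := by
      have h := congrFun (congrFun hcomm 1) 2
      simp [Matrix.mul_apply, Fin.sum_univ_succ] at h
      linarith
    have e20 : A 2 0 = 0 := by
      have h := congrFun (congrFun hcomm 2) 0
      simp [Matrix.mul_apply, Fin.sum_univ_succ] at h
      linarith
    have e21 : A 2 1 = 0 := by
      have h := congrFun (congrFun hcomm 2) 1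
      simp [Matrix.mul_apply, Fin.sum_univ_succ] at h
      linarith
    set a := A 0 0 with ha; set b := A 0 1 with hb
    set c := A 1 0 with hc; set d := A 1 1 with hd; set e := A 2 2 with he'
    have col00 : a ^ 2 + c ^ 2 = 1 := by
      have h := congrFun (congrFun hst 0) 0
      simp [Matrix.mul_apply, Fin.sum_univ_succ, Matrix.star_eq_conjTranspose,
        Matrix.conjTranspose_apply, Matrix.one_apply, e20] at h
      nlinarith
    have col11 : b ^ 2 + d ^ 2 = 1 := by
      have h := congrFun (congrFun hst 1) 1
      simp [Matrix.mul_apply, Fin.sum_univ_succ, Matrix.star_eq_conjTranspose,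
        Matrix.conjTranspose_apply, Matrix.one_apply, e21] at h
      nlinarith
    have col01 : a * b + c * d = 0 := by
      have h := congrFun (congrFun hst 0) 1
      simp [Matrix.mul_apply, Fin.sum_univ_succ, Matrix.star_eq_conjTranspose,
        Matrix.conjTranspose_apply, Matrix.one_apply, e20, e21] at h
      linarith
    have col22 : e * e = 1 := by
      have h := congrFun (congrFun hst 2) 2
      simp [Matrix.mul_apply, Fin.sum_univ_succ, Matrix.star_eq_conjTranspose,
        Matrix.conjTranspose_apply, Matrix.one_apply, e02, e12] at h
      nlinarith
    have hdet : a * d * e - b * c * e = 1 := by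
      have hd1 : A.det = 1 := g.2.2
      rw [Matrix.det_fin_three] at hd1
      rw [e02, e12, e20, e21] at hd1
      ring_nf at hd1 ⊢
      linarith
    rcases mul_self_eq_one_iff.mp col22 with he | he
    · -- e = 1 : g is a rotation
      have hd1 : a * d - b * c = 1 := by rw [he] at hdet; linarith
      have hda : d = a := by linear_combination a * hd1 + c * col01 - d * col00
      have hbc : b = -c := by linear_combination a * col01 - c * hd1 - b * col00
      obtain ⟨φ, hcos, hsin⟩ := exists_cos_sin col00
      refine ⟨φ, Or.inl ?_⟩
      apply Subtype.ext
      show A = RzMat φ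
      ext i j
      fin_cases i <;> fin_cases j <;>
        simp [RzMat, hcos, hsin, e02, e12, e20, e21, he, hda, hbc,
          ← ha, ← hb, ← hc, ← hd, ← he']
    · -- e = -1 : g is a reflected rotation
      have hd1 : a * d - b * c = -1 := by rw [he] at hdet; linarith
      have hda : d = -a := by linear_combination a * hd1 + c * col01 - d * col00
      have hbc : b = c := by linear_combination a * col01 - c * hd1 - b * col00
      obtain ⟨φ, hcos, hsin⟩ := exists_cos_sin (show a ^ 2 + (-c) ^ 2 = 1 by nlinarith)
      refine ⟨φ, Or.inr ?_⟩
      apply Subtype.ext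
      show A = rhoMat * RzMat φ
      rw [rho_mul_RzMat]
      ext i j
      fin_cases i <;> fin_cases j <;>
        simp [hcos, hsin, e02, e12, e20, e21, he, hda, hbc,
          ← ha, ← hb, ← hc, ← hd, ← he']

end
end
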